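/- The quartic polynomial x⁴ + 5x² - 3 is irreducible over Q and has exactly two real roots; hence the number field Q[x]/(x⁴ + 5x² - 3) has two real places and one complex place. -/
import Mathlib

open Polynomial

lemma rat_sq_ne_37 (s : ℚ) : s ^ 2 ≠ 37 := by
  intro h
  have hirr : Irrational (Real.sqrt 37) := (by norm_num : Nat.Prime 37).irrational_sqrt
  have h2 : ((s : ℝ)) ^ 2 = 37 := by exact_mod_cast congrArg (Rat.cast : ℚ → ℝ) h
  have hs : Real.sqrt 37 = |(s : ℝ)| := by rw [← h2, Real.sqrt_sq_eq_abs]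
  exact hirr ⟨|s|, by push_cast; rw [hs]⟩

lemma monic2_form (p : ℚ[X]) (hm : p.Monic) (hd : p.natDegree = 2) :
    p = X ^ 2 + C (p.coeff 1) * X + C (p.coeff 0) := by
  ext n
  have h2 : p.coeff 2 = 1 := by
    have := hm.coeff_natDegree
    rwa [hd] at this
  match n with
  | 0 => simp
  | 1 => simp
  | 2 => simp [h2]
  | (n+3) =>
    rw [p.coeff_eq_zero_of_natDegree_lt (by omega)]
    simp [coeff_X_pow]

lemma no_quad_factor (b1 c1 b2 c2 : ℚ)
    (heq : (X:ℚ[X])^4 + 5*X^2 - 3 = (X^2 + C b1*X + C c1) * (X^2 + C b2*X + C c2)) :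
    False := by
  have hR : (X^2 + C b1*X + C c1) * (X^2 + C b2*X + C c2) =
      X^4 + C (b1+b2) * X^3 + C (c1+c2+b1*b2) * X^2 + C (b1*c2+b2*c1) * X + C (c1*c2) := by
    simp only [C_add, C_mul]; ring
  have hL : (X:ℚ[X])^4 + 5*X^2 - 3 = X^4 + C 5 * X^2 + C (-3) := by
    simp only [map_neg, map_ofNat]; ring
  rw [hR, hL] at heq
  have h3 := congrArg (fun p => Polynomial.coeff p 3) heq
  have h2 := congrArg (fun p => Polynomial.coeff p 2) heq
  have h1 := congrArg (fun p => Polynomial.coeff p 1) heq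
  have h0 := congrArg (fun p => Polynomial.coeff p 0) heq
  simp only [coeff_add, coeff_C_mul, coeff_X_pow, coeff_C, coeff_X] at h3 h2 h1 h0
  norm_num at h3 h2 h1 h0
  rcases mul_eq_zero.mp (show b1 * (c2 - c1) = 0 by linear_combination (-1)*h1 + c1*h3) with hb | hc
  · subst hb
    have hb2 : b2 = 0 := by linarith
    subst hb2
    exact rat_sq_ne_37 (c1 - c2) (by linear_combination (-(c1+c2+5))*h2 + 4*h0)
  · have hcc : c2 = c1 := by linarith
    rw [hcc] at h0
    nlinarith [mul_self_nonneg c1]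

lemma no_rat_root (r : ℚ) : r^4 + 5*r^2 - 3 ≠ 0 := by
  intro h
  exact rat_sq_ne_37 (2*r^2 + 5) (by linear_combination 4*h)

lemma fdeg : ((X:ℚ[X])^4 + 5*X^2 - 3).natDegree = 4 := by compute_degree!

lemma fmonic : ((X:ℚ[X])^4 + 5*X^2 - 3).Monic := by monicity!

lemma no_lin_factor (g h : ℚ[X]) (heq : (X:ℚ[X])^4 + 5*X^2 - 3 = g * h)
    (hg1 : g.natDegree = 1) : False := by
  obtain ⟨a, ha, b, hab⟩ := natDegree_eq_one.mp hg1
  have hroot : g.eval (-b/a) = 0 := by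
    rw [← hab]; simp; field_simp; ring
  have hf : ((X:ℚ[X])^4 + 5*X^2 - 3).eval (-b/a) = 0 := by
    rw [heq, eval_mul, hroot, zero_mul]
  simp only [eval_sub, eval_add, eval_mul, eval_pow, eval_X, eval_ofNat] at hf
  exact no_rat_root _ hf

lemma firr : Irreducible ((X : ℚ[X]) ^ 4 + 5 * X ^ 2 - 3) := by
  constructor
  · intro hu
    have := natDegree_eq_zero_of_isUnit hu
    rw [fdeg] at this; exact absurd this (by norm_num)
  · intro g h heq
    by_contra hcon
    push_neg at hcon
    obtain ⟨hgu, hhu⟩ := hcon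
    have hf0 : ((X:ℚ[X])^4 + 5*X^2 - 3) ≠ 0 := fmonic.ne_zero
    have hg0 : g ≠ 0 := fun hg => hf0 (by rw [heq, hg, zero_mul])
    have hh0 : h ≠ 0 := fun hh => hf0 (by rw [heq, hh, mul_zero])
    have hsum : g.natDegree + h.natDegree = 4 := by
      rw [← natDegree_mul hg0 hh0, ← heq, fdeg]
    have hg1 : 1 ≤ g.natDegree := by
      by_contra hlt
      push_neg at hlt
      have h0 : g.natDegree = 0 := by omega
      refine hgu ?_
      rw [eq_C_of_natDegree_eq_zero h0]
      exact isUnit_C.mpr (isUnit_iff_ne_zero.mpr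
        (fun hc => hg0 (by rw [eq_C_of_natDegree_eq_zero h0, hc, map_zero])))
    have hh1 : 1 ≤ h.natDegree := by
      by_contra hlt
      push_neg at hlt
      have h0 : h.natDegree = 0 := by omega
      refine hhu ?_
      rw [eq_C_of_natDegree_eq_zero h0]
      exact isUnit_C.mpr (isUnit_iff_ne_zero.mpr
        (fun hc => hh0 (by rw [eq_C_of_natDegree_eq_zero h0, hc, map_zero])))
    have hcases : g.natDegree = 1 ∨ g.natDegree = 2 ∨ g.natDegree = 3 := by omega
    rcases hcases with hgd | hgd | hgd
    · exact no_lin_factor g h heq hgd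
    · -- degree 2,2 case
      have hhd : h.natDegree = 2 := by omega
      -- monicize
      set u := g.leadingCoeff with hu
      have hu0 : u ≠ 0 := leadingCoeff_ne_zero.mpr hg0
      have hlc : u * h.leadingCoeff = 1 := by
        have := fmonic.leadingCoeff
        rw [heq, leadingCoeff_mul] at this
        exact this
      set g' := C u⁻¹ * g with hg'
      set h' := C u * h with hh'
      have heq' : (X:ℚ[X])^4 + 5*X^2 - 3 = g' * h' := by
        rw [hg', hh', heq]
        rw [mul_mul_mul_comm, ← C_mul, inv_mul_cancel₀ hu0, C_1, one_mul]
      have hg'm : g'.Monic := by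
        show (C u⁻¹ * g).Monic
        rw [Monic, leadingCoeff_mul, leadingCoeff_C, inv_mul_cancel₀ hu0]
      have hh'm : h'.Monic := by
        show (C u * h).Monic
        rw [Monic, leadingCoeff_mul, leadingCoeff_C, hlc]
      have hg'd : g'.natDegree = 2 := by
        rw [hg', natDegree_C_mul (inv_ne_zero hu0), hgd]
      have hh'd : h'.natDegree = 2 := by
        rw [hh', natDegree_C_mul hu0, hhd]
      rw [monic2_form g' hg'm hg'd, monic2_form h' hh'm hh'd] at heq'
      exact no_quad_factor _ _ _ _ heq'
    · -- g degree 3, h degree 1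
      have hhd : h.natDegree = 1 := by omega
      exact no_lin_factor h g (by rw [heq, mul_comm]) hhd

open Polynomial in
/-- `x⁴ + 5x² - 3` is irreducible over `ℚ` and has exactly two real roots (and
hence one pair of non-real complex conjugate roots), so the field
`ℚ[x]/(x⁴+5x²-3)` has two real places and one complex place. -/
theorem quartic_irreducible_two_real_roots :
    Irreducible ((X : ℚ[X]) ^ 4 + 5 * X ^ 2 - 3) ∧
    {x : ℝ | x ^ 4 + 5 * x ^ 2 - 3 = 0}.ncard = 2 ∧
    {z : ℂ | z ^ 4 + 5 * z ^ 2 - 3 = 0 ∧ z.im ≠ 0}.ncard = 2 := by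
  have h37 : Real.sqrt 37 ^ 2 = 37 := Real.sq_sqrt (by norm_num)
  have h37gt : (5:ℝ) < Real.sqrt 37 := by
    rw [show (5:ℝ) = Real.sqrt 25 by rw [show (25:ℝ) = 5^2 by norm_num, Real.sqrt_sq] ; norm_num]
    exact Real.sqrt_lt_sqrt (by norm_num) (by norm_num)
  set s := Real.sqrt 37 with hs
  set A : ℝ := (-5 + s)/2 with hA
  set B : ℝ := (5 + s)/2 with hB
  have hApos : 0 < A := by rw [hA]; linarith
  have hBpos : 0 < B := by rw [hB]; linarith
  set r := Real.sqrt A with hr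
  set c := Real.sqrt B with hc
  have hr2 : r ^ 2 = A := Real.sq_sqrt hApos.le
  have hc2 : c ^ 2 = B := Real.sq_sqrt hBpos.le
  have hrpos : 0 < r := Real.sqrt_pos.mpr hApos
  have hcpos : 0 < c := Real.sqrt_pos.mpr hBpos
  have h5r : c ^ 2 - r ^ 2 = 5 := by rw [hr2, hc2, hA, hB]; ring
  have h3r : r ^ 2 * c ^ 2 = 3 := by rw [hr2, hc2, hA, hB]; linear_combination h37/4
  refine ⟨firr, ?_, ?_⟩
  · have hset : {x : ℝ | x ^ 4 + 5 * x ^ 2 - 3 = 0} = {r, -r} := by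
      ext x
      simp only [Set.mem_setOf_eq, Set.mem_insert_iff, Set.mem_singleton_iff]
      constructor
      · intro hx
        have key : (x ^ 2 - r ^ 2) * (x ^ 2 + c ^ 2) = 0 := by
          linear_combination hx + x^2 * h5r - h3r
        have hpos : x ^ 2 + c ^ 2 > 0 := by positivity
        have hx2 : x ^ 2 - r ^ 2 = 0 := by
          rcases mul_eq_zero.mp key with h | h
          · exact h
          · linarith
        have : (x - r) * (x + r) = 0 := by linear_combination hx2
        rcases mul_eq_zero.mp this with h | h
        · left; linarith
        · right; linarith
      · rintro (rfl | rfl)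
        · linear_combination (r^2 + A + 5) * hr2 + h37/4
        · linear_combination (r^2 + A + 5) * hr2 + h37/4
    rw [hset]
    exact Set.ncard_pair (by intro h; linarith)
  · have h5c : (c:ℂ) ^ 2 - (r:ℂ) ^ 2 = 5 := by exact_mod_cast h5r
    have h3c : (r:ℂ) ^ 2 * (c:ℂ) ^ 2 = 3 := by exact_mod_cast h3r
    set u : ℂ := Complex.I * (c:ℂ) with hu
    have hcne : (c:ℂ) ≠ 0 := by
      simpa using hcpos.ne'
    have huim : u.im = c := by
      rw [hu]; simp
    have hset : {z : ℂ | z ^ 4 + 5 * z ^ 2 - 3 = 0 ∧ z.im ≠ 0} = {u, -u} := by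
      ext z
      simp only [Set.mem_setOf_eq, Set.mem_insert_iff, Set.mem_singleton_iff]
      constructor
      · rintro ⟨hz, him⟩
        have key : (z ^ 2 - (r:ℂ) ^ 2) * (z ^ 2 + (c:ℂ) ^ 2) = 0 := by
          linear_combination hz + z^2 * h5c - h3c
        rcases mul_eq_zero.mp key with h | h
        · exfalso
          have : (z - (r:ℂ)) * (z + (r:ℂ)) = 0 := by linear_combination h
          rcases mul_eq_zero.mp this with h' | h'
          · have : z = (r:ℂ) := by linear_combination h'
            rw [this] at him; simp at him
          · have : z = -(r:ℂ) := by linear_combination h'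
            rw [this] at him; simp at him
        · have : (z - u) * (z + u) = 0 := by
            rw [hu]
            linear_combination h - (c:ℂ)^2 * Complex.I_sq
          rcases mul_eq_zero.mp this with h' | h'
          · left; linear_combination h'
          · right; linear_combination h'
      · have heval : u ^ 4 + 5 * u ^ 2 - 3 = 0 := by
          rw [hu]
          linear_combination ((c:ℂ)^4*(Complex.I^2 - 1) + 5*(c:ℂ)^2) * Complex.I_sq
            + (c:ℂ)^2 * h5c + h3c
        rintro (rfl | rfl)
        · exact ⟨heval, by rw [huim]; exact_mod_cast hcpos.ne'⟩
        · refine ⟨by linear_combination heval, ?_⟩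
          simp only [Complex.neg_im, huim]
          exact_mod_cast (neg_ne_zero.mpr hcpos.ne')
    rw [hset]
    refine Set.ncard_pair ?_
    intro h
    have h0 : u = 0 := by linear_combination h/2
    rw [hu] at h0
    rcases mul_eq_zero.mp h0 with h' | h'
    · exact Complex.I_ne_zero h'
    · exact hcne h'
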